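/- A graph G is simultaneously proximinal and path-proximinal for an ultrametric space (X,d) and given disjoint proximinal subsets A and B of X if and only if every connected component of G has exactly 2 vertices. -/

import Mathlib

open SimpleGraph Set

/-- A "graph on a vertex subset": a subgraph of the complete graph on `V`. -/
abbrev Gr (V : Type) := SimpleGraph.Subgraph (⊤ : SimpleGraph V)

/-- `P` is the path graph `(u₀, …, u_k)` whose vertex list is `l`. -/
def IsPathGraphOn {V : Type} (l : List V) (P : Gr V) : Prop :=
  l.Nodup ∧ 2 ≤ l.length ∧ P.verts = {v | v ∈ l} ∧
    ∀ x y, P.Adj x y ↔ ([x, y] <:+: l ∨ [y, x] <:+: l)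

/-- `P` is a path graph. -/
def IsPathGraph {V : Type} (P : Gr V) : Prop := ∃ l, IsPathGraphOn l P

/-- `P` is a path joining `a` and `b`. -/
def IsPathFrom {V : Type} (P : Gr V) (a b : V) : Prop :=
  ∃ l, IsPathGraphOn l P ∧
    ((l.head? = some a ∧ l.getLast? = some b) ∨ (l.head? = some b ∧ l.getLast? = some a))

/-- `P` is a be-path of `A` and `B`: a path with vertices in `A ∪ B` having a unique
edge `{a₀, b₀}` meeting both `A` and `B`. -/
def IsBePath {V : Type} (A B : Set V) (P : Gr V) : Prop :=
  IsPathGraph P ∧ P.verts ⊆ A ∪ B ∧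
    ∃ a₀ b₀, a₀ ∈ A ∧ b₀ ∈ B ∧ P.Adj a₀ b₀ ∧
      ∀ x y, P.Adj x y → x ∈ A → y ∈ B → x = a₀ ∧ y = b₀

/-- `G` is a path-bipartite graph of `A` and `B`: `A`, `B` are disjoint nonempty subsets of
`V(G)` and `G` is the union of a nonempty family of be-paths of `A` and `B`. -/
def IsPathBipartite {V : Type} (A B : Set V) (G : Gr V) : Prop :=
  A.Nonempty ∧ B.Nonempty ∧ Disjoint A B ∧ A ⊆ G.verts ∧ B ⊆ G.verts ∧
    ∃ Ps : Set (Gr V), Ps.Nonempty ∧ (∀ P ∈ Ps, IsBePath A B P) ∧ G = sSup Ps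

/-- `G` is connected: any two distinct vertices are joined by a path in `G`. -/
def ConnectedGr {V : Type} (G : Gr V) : Prop :=
  ∀ u v, u ∈ G.verts → v ∈ G.verts → u ≠ v → ∃ P, P ≤ G ∧ IsPathFrom P u v

/-- `H` is a connected component of `G`: a maximal connected subgraph. -/
def IsComponent {V : Type} (G H : Gr V) : Prop :=
  H ≤ G ∧ ConnectedGr H ∧ ∀ Γ, Γ ≤ G → ConnectedGr Γ → H ≤ Γ → H = Γ

/-- Some `a ∈ A` and `b ∈ B` are joined by a be-path of `A` and `B` contained in `G`,
i.e. `(a, b) ∈ 𝓑_path(G)`. -/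
def BePathJoined {V : Type} (G : Gr V) (A B : Set V) (a b : V) : Prop :=
  ∃ P, P ≤ G ∧ IsBePath A B P ∧ IsPathFrom P a b

/-- `G` is path-complete: every `(a,b) ∈ A × B` is joined by a be-path in `G`. -/
def PathComplete {V : Type} (G : Gr V) (A B : Set V) : Prop :=
  ∀ a ∈ A, ∀ b ∈ B, BePathJoined G A B a b

/-- The induced-bipartite subgraph `G[A, B]`. -/
def induceBip {V : Type} (G : Gr V) (A B : Set V) : Gr V where
  verts := A ∪ B
  Adj x y := G.Adj x y ∧ ((x ∈ A ∧ y ∈ B) ∨ (x ∈ B ∧ y ∈ A))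
  adj_sub h := G.adj_sub h.1
  edge_vert h := h.2.elim (fun hh => Or.inl hh.1) (fun hh => Or.inr hh.1)
  symm := ⟨fun x y h => ⟨h.1.symm, h.2.elim (fun hh => Or.inr ⟨hh.2, hh.1⟩) (fun hh => Or.inl ⟨hh.2, hh.1⟩)⟩⟩

/-- `d` is a semimetric. -/
def IsSemimetric {X : Type} (d : X → X → ℝ) : Prop :=
  (∀ x y, 0 ≤ d x y) ∧ (∀ x y, d x y = d y x) ∧ ∀ x y, d x y = 0 ↔ x = y

/-- `d` is a metric. -/
def IsMetric {X : Type} (d : X → X → ℝ) : Prop :=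
  IsSemimetric d ∧ ∀ x y z, d x y ≤ d x z + d z y

/-- `d` is an ultrametric. -/
def IsUltrametric {X : Type} (d : X → X → ℝ) : Prop :=
  IsSemimetric d ∧ ∀ x y z, d x y ≤ max (d x z) (d z y)

/-- `dist(A, B) = inf{d(a,b) : a ∈ A, b ∈ B}`. -/
noncomputable def setDist {X : Type} (d : X → X → ℝ) (A B : Set X) : ℝ :=
  sInf {r | ∃ a ∈ A, ∃ b ∈ B, d a b = r}

/-- `A` is a proximinal subset: every point has a best approximation in `A`. -/
def ProximinalSet {X : Type} (d : X → X → ℝ) (A : Set X) : Prop :=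
  ∀ x, ∃ a₀ ∈ A, d x a₀ = setDist d {x} A

/-- `G` is path-proximinal for `A` and `B` w.r.t. the semimetric `d` on `X = A ∪ B`. -/
def IsPathProximinal {X : Type} (d : X → X → ℝ) (A B : Set X) (G : Gr X) : Prop :=
  IsPathBipartite A B G ∧ ProximinalSet d A ∧ ProximinalSet d B ∧
    ∀ x ∈ A ∪ B, ∀ y ∈ A ∪ B, x ≠ y → (G.Adj x y ↔ d x y ≤ setDist d A B)

/-- `G` is a proximinal bipartite graph with parts `A` and `B` for `(X, d)`. -/
def IsProximinalGraph {X : Type} (d : X → X → ℝ) (A B : Set X) (G : Gr X) : Prop :=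
  A.Nonempty ∧ B.Nonempty ∧ Disjoint A B ∧ G.verts = A ∪ B ∧
    (∀ x y, G.Adj x y → (x ∈ A ∧ y ∈ B) ∨ (x ∈ B ∧ y ∈ A)) ∧
    ProximinalSet d A ∧ ProximinalSet d B ∧
    ∀ a ∈ A, ∀ b ∈ B, (G.Adj a b ↔ d a b = setDist d A B)

-- infix of length 2 in a 2-list
lemma infix_pair_iff {V : Type} {x y a b : V} :
    [x, y] <:+: [a, b] ↔ x = a ∧ y = b := by
  constructor
  · intro h
    have := h.eq_of_length (by simp)
    simp_all
  · rintro ⟨rfl, rfl⟩; exact List.infix_refl _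

-- every vertex of a list of length ≥ 2 has a "neighbor" consecutive to it
lemma exists_nbr_in_list {V : Type} :
    ∀ (l : List V), 2 ≤ l.length → ∀ v ∈ l, ∃ w, [v, w] <:+: l ∨ [w, v] <:+: l := by
  intro l
  induction l with
  | nil => simp
  | cons a t ih =>
    intro hlen v hv
    match t, hv with
    | [], hv => simp at hlen
    | b :: t', hv =>
      rcases List.mem_cons.1 hv with rfl | hv'
      · exact ⟨b, Or.inl ⟨[], t', rfl⟩⟩
      · rcases t' with _ | ⟨c, t''⟩
        · rcases List.mem_singleton.1 hv' with rfl
          exact ⟨a, Or.inr ⟨[], [], rfl⟩⟩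
        · obtain ⟨w, hw⟩ := ih (by simp) v hv'
          exact ⟨w, hw.imp (fun h => h.trans (List.suffix_cons a _).isInfix)
            (fun h => h.trans (List.suffix_cons a _).isInfix)⟩

lemma three_le_infix {V : Type} {l : List V} (h : 3 ≤ l.length) :
    ∃ x y z t, l = x :: y :: z :: t ∧ [x, y] <:+: l ∧ [y, z] <:+: l := by
  match l, h with
  | x :: y :: z :: t, _ =>
    exact ⟨x, y, z, t, rfl, ⟨[], z :: t, rfl⟩, ⟨[x], t, rfl⟩⟩

-- in a "matching" graph, any nodup path list has length ≤ 2
lemma matching_list_len {V : Type} {G : Gr V} {l : List V}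
    (hm : ∀ x y z, G.Adj x y → G.Adj x z → y = z)
    (hnd : l.Nodup)
    (hadj : ∀ x y, [x, y] <:+: l → G.Adj x y) :
    l.length ≤ 2 := by
  by_contra hlen
  have h3 : 3 ≤ l.length := by omega
  obtain ⟨x, y, z, t, rfl, h1, h2⟩ := three_le_infix h3
  have a1 : G.Adj y x := (hadj x y h1).symm
  have a2 : G.Adj y z := hadj y z h2
  have : x = z := hm y x z a1 a2
  subst this
  simp [List.nodup_cons] at hnd

/-- Single-vertex subgraph. -/
def vertGr {V : Type} (v : V) : Gr V where
  verts := {v}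
  Adj _ _ := False
  adj_sub h := h.elim
  edge_vert h := h.elim
  symm := ⟨fun _ _ h => h⟩

/-- Single-edge subgraph. -/
def edgeGr {V : Type} (a b : V) : Gr V where
  verts := {a, b}
  Adj x y := x ≠ y ∧ ((x = a ∧ y = b) ∨ (x = b ∧ y = a))
  adj_sub h := h.1
  edge_vert h := h.2.elim (fun hh => Or.inl hh.1) (fun hh => Or.inr hh.1)
  symm := ⟨fun x y h => ⟨h.1.symm, h.2.elim (fun hh => Or.inr ⟨hh.2, hh.1⟩) (fun hh => Or.inl ⟨hh.2, hh.1⟩)⟩⟩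

lemma edgeGr_pathOn {V : Type} {a b : V} (hab : a ≠ b) :
    IsPathGraphOn [a, b] (edgeGr a b) := by
  refine ⟨by simp [hab], by simp, by ext x; simp [edgeGr], ?_⟩
  intro x y
  simp only [edgeGr, infix_pair_iff]
  constructor
  · rintro ⟨hne, (⟨rfl, rfl⟩ | ⟨rfl, rfl⟩)⟩
    · exact Or.inl ⟨rfl, rfl⟩
    · exact Or.inr ⟨rfl, rfl⟩
  · rintro (⟨rfl, rfl⟩ | ⟨rfl, rfl⟩)
    · exact ⟨hab, Or.inl ⟨rfl, rfl⟩⟩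
    · exact ⟨hab.symm, Or.inr ⟨rfl, rfl⟩⟩

lemma edgeGr_pathFrom {V : Type} {a b : V} (hab : a ≠ b) :
    IsPathFrom (edgeGr a b) a b :=
  ⟨[a, b], edgeGr_pathOn hab, Or.inl ⟨rfl, rfl⟩⟩

lemma edgeGr_connected {V : Type} {a b : V} (hab : a ≠ b) :
    ConnectedGr (edgeGr a b) := by
  intro u v hu hv huv
  refine ⟨edgeGr a b, le_refl _, [a, b], edgeGr_pathOn hab, ?_⟩
  simp only [edgeGr] at hu hv
  rcases hu with rfl | rfl <;> rcases hv with rfl | rfl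
  · exact absurd rfl huv
  · exact Or.inl ⟨rfl, rfl⟩
  · exact Or.inr ⟨rfl, rfl⟩
  · exact absurd rfl huv

lemma infix_pair_triple {V : Type} {x y a b c : V} :
    [x, y] <:+: [a, b, c] ↔ (x = a ∧ y = b) ∨ (x = b ∧ y = c) := by
  rw [List.infix_cons_iff, List.infix_cons_iff]
  constructor
  · rintro (h | h | h)
    · rcases h with ⟨t, ht⟩
      simp [List.cons_eq_cons] at ht
      exact Or.inl ⟨ht.1, ht.2.1⟩
    · rcases h with ⟨t, ht⟩
      simp [List.cons_eq_cons] at ht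
      exact Or.inr ⟨ht.1, ht.2.1⟩
    · rcases h with ⟨s, t, ht⟩
      have h := congrArg List.length ht
      simp [List.length_append] at h
      omega
  · rintro (⟨rfl, rfl⟩ | ⟨rfl, rfl⟩)
    · exact Or.inl ⟨[c], rfl⟩
    · exact Or.inr (Or.inl ⟨[], rfl⟩)

/-- Three-vertex path subgraph `a - b - c`. -/
def path3 {V : Type} (a b c : V) : Gr V where
  verts := {a, b, c}
  Adj x y := x ≠ y ∧ ((x = a ∧ y = b) ∨ (x = b ∧ y = a) ∨ (x = b ∧ y = c) ∨ (x = c ∧ y = b))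
  adj_sub h := h.1
  edge_vert h := by rcases h.2 with ⟨rfl, _⟩ | ⟨rfl, _⟩ | ⟨rfl, _⟩ | ⟨rfl, _⟩ <;> simp
  symm := ⟨fun x y h => ⟨h.1.symm, by tauto⟩⟩

lemma path3_pathOn {V : Type} {a b c : V} (hab : a ≠ b) (hbc : b ≠ c) (hac : a ≠ c) :
    IsPathGraphOn [a, b, c] (path3 a b c) := by
  refine ⟨by simp [hab, hbc, hac], by simp, by ext x; simp [path3], ?_⟩
  intro x y
  simp only [path3, infix_pair_triple]
  constructor
  · rintro ⟨hne, (⟨rfl, rfl⟩ | ⟨rfl, rfl⟩ | ⟨rfl, rfl⟩ | ⟨rfl, rfl⟩)⟩ <;> tauto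
  · rintro ((⟨rfl, rfl⟩ | ⟨rfl, rfl⟩) | (⟨rfl, rfl⟩ | ⟨rfl, rfl⟩))
    · exact ⟨hab, by tauto⟩
    · exact ⟨hbc, by tauto⟩
    · exact ⟨hab.symm, by tauto⟩
    · exact ⟨hbc.symm, by tauto⟩

lemma path3_connected {V : Type} {a b c : V} (hab : a ≠ b) (hbc : b ≠ c) (hac : a ≠ c) :
    ConnectedGr (path3 a b c) := by
  have hle1 : edgeGr a b ≤ path3 a b c := by
    constructor
    · intro x hx; rcases hx with rfl | rfl <;> simp [path3]
    · rintro x y ⟨hne, (⟨rfl, rfl⟩ | ⟨rfl, rfl⟩)⟩ <;> exact ⟨hne, by tauto⟩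
  have hle2 : edgeGr b c ≤ path3 a b c := by
    constructor
    · intro x hx; rcases hx with rfl | rfl <;> simp [path3]
    · rintro x y ⟨hne, (⟨rfl, rfl⟩ | ⟨rfl, rfl⟩)⟩ <;> exact ⟨hne, by tauto⟩
  intro u v hu hv huv
  have hm : u = a ∨ u = b ∨ u = c := by simpa [path3] using hu
  have hm' : v = a ∨ v = b ∨ v = c := by simpa [path3] using hv
  rcases hm with rfl | rfl | rfl <;> rcases hm' with rfl | rfl | rfl <;>
    first
    | exact absurd rfl huv
    | exact ⟨edgeGr _ _, hle1, edgeGr_pathFrom hab⟩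
    | exact ⟨edgeGr _ _, hle1, [_, _], edgeGr_pathOn hab, Or.inr ⟨rfl, rfl⟩⟩
    | exact ⟨edgeGr _ _, hle2, edgeGr_pathFrom hbc⟩
    | exact ⟨edgeGr _ _, hle2, [_, _], edgeGr_pathOn hbc, Or.inr ⟨rfl, rfl⟩⟩
    | exact ⟨path3 _ _ _, le_refl _, [_, _, _], path3_pathOn hab hbc hac, Or.inl ⟨rfl, rfl⟩⟩
    | exact ⟨path3 _ _ _, le_refl _, [_, _, _], path3_pathOn hab hbc hac, Or.inr ⟨rfl, rfl⟩⟩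

lemma adj_of_pathFrom_short {V : Type} {P : Gr V} {v u : V} (h : IsPathFrom P v u)
    (hshort : ∀ l, IsPathGraphOn l P → l.length ≤ 2) : P.Adj v u := by
  obtain ⟨l, hl, hends⟩ := h
  have hlen : l.length = 2 := le_antisymm (hshort l hl) hl.2.1
  obtain ⟨hnd, -, hverts, hadj⟩ := hl
  match l, hlen, hends, hadj with
  | [p, q], _, hends, hadj =>
    rcases hends with ⟨h1, h2⟩ | ⟨h1, h2⟩ <;>
      simp only [List.head?, List.getLast?_cons_cons, List.getLast?_singleton,
        Option.some.injEq] at h1 h2 <;> subst h1 <;> subst h2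
    · exact (hadj _ _).2 (Or.inl (List.infix_refl _))
    · exact (hadj _ _).2 (Or.inr (List.infix_refl _))

lemma exists_component {V : Type} (G K : Gr V) (hKG : K ≤ G) (hKc : ConnectedGr K) :
    ∃ H, IsComponent G H ∧ K ≤ H := by
  have hih : ∀ c ⊆ {Γ : Gr V | Γ ≤ G ∧ ConnectedGr Γ}, IsChain (· ≤ ·) c → ∀ y ∈ c,
      ∃ ub ∈ {Γ : Gr V | Γ ≤ G ∧ ConnectedGr Γ}, ∀ z ∈ c, z ≤ ub := by
    intro c hcs hchain y hy
    refine ⟨sSup c, ⟨sSup_le fun Γ hΓ => (hcs hΓ).1, ?_⟩, fun z hz => le_sSup hz⟩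
    intro x x' hx hx' hxx'
    rw [SimpleGraph.Subgraph.verts_sSup] at hx hx'
    simp only [Set.mem_iUnion] at hx hx'
    obtain ⟨Γ₁, h1, hx⟩ := hx
    obtain ⟨Γ₂, h2, hx'⟩ := hx'
    rcases hchain.total h1 h2 with hle | hle
    · obtain ⟨P, hPle, hP⟩ := (hcs h2).2 x x' (hle.1 hx) hx' hxx'
      exact ⟨P, hPle.trans (le_sSup h2), hP⟩
    · obtain ⟨P, hPle, hP⟩ := (hcs h1).2 x x' hx (hle.1 hx') hxx'
      exact ⟨P, hPle.trans (le_sSup h1), hP⟩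
  obtain ⟨m, hKm, hmax⟩ :=
    zorn_le_nonempty₀ {Γ : Gr V | Γ ≤ G ∧ ConnectedGr Γ} hih K ⟨hKG, hKc⟩
  have hmem := hmax.prop
  exact ⟨m, ⟨hmem.1, hmem.2,
    fun Γ hΓG hΓc hmΓ => le_antisymm hmΓ (hmax.le_of_ge ⟨hΓG, hΓc⟩ hmΓ)⟩, hKm⟩

lemma vertGr_connected {V : Type} (v : V) : ConnectedGr (vertGr v) := by
  intro u u' hu hu' hne
  have h1 : u = v := hu
  have h2 : u' = v := hu'
  exact absurd (h1.trans h2.symm) hne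

lemma component_pair {X : Type} [Nonempty X] {G H : Gr X} (hV : G.verts = Set.univ)
    (hex : ∀ x, ∃ w, G.Adj x w)
    (hm : ∀ x y z, G.Adj x y → G.Adj x z → y = z)
    (hH : IsComponent G H) : ∃ u v, u ≠ v ∧ H.verts = {u, v} := by
  obtain ⟨hHG, hHc, hHmax⟩ := hH
  have hne : H.verts.Nonempty := by
    by_contra hemp
    rw [Set.not_nonempty_iff_eq_empty] at hemp
    have x0 : X := Classical.arbitrary X
    have hKG : vertGr x0 ≤ G := ⟨by rw [hV]; exact subset_univ _, fun _ _ h => h.elim⟩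
    have hle : H ≤ vertGr x0 :=
      ⟨by rw [hemp]; exact empty_subset _,
       fun x y hxy => absurd hxy.fst_mem (by rw [hemp]; exact notMem_empty x)⟩
    have heq : H = vertGr x0 := hHmax _ hKG (vertGr_connected x0) hle
    rw [heq] at hemp
    exact absurd hemp (by simp [vertGr])
  obtain ⟨v, hvH⟩ := hne
  obtain ⟨w, hvw⟩ := hex v
  have hvwne : v ≠ w := hvw.ne
  have hEG : edgeGr v w ≤ G := by
    constructor
    · rw [hV]; exact subset_univ _
    · rintro x y ⟨-, (⟨rfl, rfl⟩ | ⟨rfl, rfl⟩)⟩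
      · exact hvw
      · exact hvw.symm
  have hHE : H ≤ edgeGr v w := by
    have hsub : H.verts ⊆ {v, w} := by
      intro u hu
      by_cases huv : u = v
      · exact Or.inl huv
      · obtain ⟨P, hPH, hP⟩ := hHc v u hvH hu (Ne.symm huv)
        have hPadj : P.Adj v u := by
          refine adj_of_pathFrom_short hP ?_
          intro l hl
          exact matching_list_len hm hl.1
            (fun x y hxy => (hPH.trans hHG).2 ((hl.2.2.2 x y).2 (Or.inl hxy)))
        exact Or.inr (hm v u w (hHG.2 (hPH.2 hPadj)) hvw)
    refine ⟨hsub, ?_⟩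
    intro x y hxy
    have hx := hsub hxy.fst_mem
    have hy := hsub hxy.snd_mem
    have hne := hxy.ne
    refine ⟨hne, ?_⟩
    rcases hx with rfl | rfl <;> rcases hy with rfl | rfl
    · exact absurd rfl hne
    · exact Or.inl ⟨rfl, rfl⟩
    · exact Or.inr ⟨rfl, rfl⟩
    · exact absurd rfl hne
  have heq : H = edgeGr v w := hHmax _ hEG (edgeGr_connected hvwne) hHE
  exact ⟨v, w, hvwne, by rw [heq]; rfl⟩

theorem stmt19 {X : Type} [Nonempty X] (G : Gr X) (hV : G.verts = Set.univ) :
    (∃ (d : X → X → ℝ) (A B : Set X), IsUltrametric d ∧ Disjoint A B ∧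
        ProximinalSet d A ∧ ProximinalSet d B ∧
        IsProximinalGraph d A B G ∧ IsPathProximinal d A B G) ↔
      ∀ H, IsComponent G H → ∃ u v : X, u ≠ v ∧ H.verts = {u, v} := by
  constructor
  · rintro ⟨d, A, B, hUlt, hDisj, hPA, hPB, hProx, hPathProx⟩ H hH
    obtain ⟨hAne, hBne, hDisj', hVert, hEdges, -, -, hAdjIff⟩ := hProx
    obtain ⟨hBip, -, -, hAdjLe⟩ := hPathProx
    obtain ⟨-, -, -, -, -, Ps, hPsne, hPsbe, hGsup⟩ := hBip
    have hdsymm : ∀ x y, d x y = d y x := hUlt.1.2.1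
    have hUl := hUlt.2
    have hdisj : ∀ a, a ∈ A → a ∈ B → False :=
      fun a ha hb => Set.disjoint_left.1 hDisj ha hb
    have hex : ∀ x, ∃ w, G.Adj x w := by
      intro x
      have hx : x ∈ G.verts := by rw [hV]; trivial
      rw [hGsup, SimpleGraph.Subgraph.verts_sSup] at hx
      simp only [Set.mem_iUnion] at hx
      obtain ⟨P, hP, hxP⟩ := hx
      obtain ⟨⟨l, hnd, hlen, hverts, hadjP⟩, -, -⟩ := hPsbe P hP
      have hxl : x ∈ l := by rw [hverts] at hxP; exact hxP
      obtain ⟨w, hw⟩ := exists_nbr_in_list l hlen x hxl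
      refine ⟨w, ?_⟩
      rw [hGsup]
      exact (le_sSup hP).2 ((hadjP x w).2 hw)
    have hm : ∀ x y z, G.Adj x y → G.Adj x z → y = z := by
      intro x y z hxy hxz
      by_contra hyz
      rcases hEdges x y hxy with ⟨hxA, hyB⟩ | ⟨hxB, hyA⟩
      · have hzB : z ∈ B := by
          rcases hEdges x z hxz with ⟨-, h⟩ | ⟨h, -⟩
          · exact h
          · exact (hdisj x hxA h).elim
        have h1 : d x y = setDist d A B := (hAdjIff x hxA y hyB).1 hxy
        have h2 : d x z = setDist d A B := (hAdjIff x hxA z hzB).1 hxz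
        have h3 : d y z ≤ setDist d A B := by
          calc d y z ≤ max (d y x) (d x z) := hUl y z x
          _ ≤ setDist d A B := by rw [hdsymm y x, h1, h2]; simp
        have hadj : G.Adj y z := (hAdjLe y (Or.inr hyB) z (Or.inr hzB) hyz).2 h3
        rcases hEdges y z hadj with ⟨h, -⟩ | ⟨-, h⟩
        · exact hdisj y h hyB
        · exact hdisj z h hzB
      · have hzA : z ∈ A := by
          rcases hEdges x z hxz with ⟨h, -⟩ | ⟨-, h⟩
          · exact (hdisj x h hxB).elim
          · exact h
        have h1 : d y x = setDist d A B := (hAdjIff y hyA x hxB).1 hxy.symm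
        have h2 : d z x = setDist d A B := (hAdjIff z hzA x hxB).1 hxz.symm
        have h3 : d y z ≤ setDist d A B := by
          calc d y z ≤ max (d y x) (d x z) := hUl y z x
          _ ≤ setDist d A B := by rw [h1, hdsymm x z, h2]; simp
        have hadj : G.Adj y z := (hAdjLe y (Or.inl hyA) z (Or.inl hzA) hyz).2 h3
        rcases hEdges y z hadj with ⟨-, h⟩ | ⟨h, -⟩
        · exact hdisj z hzA h
        · exact hdisj y hyA h
    exact component_pair hV hex hm hH
  · intro hcomp
    classical
    -- every vertex has a neighbor
    have hex : ∀ x, ∃ w, G.Adj x w := by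
      intro x
      have hKG : vertGr x ≤ G := ⟨by rw [hV]; exact subset_univ _, fun _ _ h => h.elim⟩
      obtain ⟨H, hH, hKH⟩ := exists_component G (vertGr x) hKG (vertGr_connected x)
      obtain ⟨u, w, huw, hverts⟩ := hcomp H hH
      have hxH : x ∈ H.verts := hKH.1 rfl
      have hHadj : H.Adj u w := by
        obtain ⟨P, hPH, hP⟩ := hH.2.1 u w (by rw [hverts]; exact Or.inl rfl)
          (by rw [hverts]; exact Or.inr rfl) huw
        refine hPH.2 (adj_of_pathFrom_short hP ?_)
        intro l hl
        have hsub : ∀ p ∈ l, p = u ∨ p = w := by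
          intro p hp
          have h1 : p ∈ P.verts := by rw [hl.2.2.1]; exact hp
          have h2 := hPH.1 h1
          rw [hverts] at h2
          exact h2
        by_contra hlen
        have h3 : 3 ≤ l.length := by omega
        obtain ⟨p, q, e, t, rfl, -, -⟩ := three_le_infix h3
        have hnd := hl.1
        simp only [List.nodup_cons, List.mem_cons] at hnd
        have hpq : p ≠ q := fun h => hnd.1 (Or.inl h)
        have hpe : p ≠ e := fun h => hnd.1 (Or.inr (Or.inl h))
        have hqe : q ≠ e := fun h => hnd.2.1 (Or.inl h)
        have hp' := hsub p (by simp)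
        have hq' := hsub q (by simp)
        have he' := hsub e (by simp)
        rcases hp' with h1 | h1 <;> rcases hq' with h2 | h2 <;> rcases he' with h3' | h3' <;>
          first
          | exact hpq (h1.trans h2.symm)
          | exact hpe (h1.trans h3'.symm)
          | exact hqe (h2.trans h3'.symm)
      have hGadj : G.Adj u w := hH.1.2 hHadj
      rw [hverts] at hxH
      rcases hxH with rfl | rfl
      · exact ⟨w, hGadj⟩
      · exact ⟨u, hGadj.symm⟩
    -- every vertex has at most one neighbor
    have hm : ∀ x y z, G.Adj x y → G.Adj x z → y = z := by
      intro x y z hxy hxz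
      by_contra hyz
      have hTG : path3 y x z ≤ G := by
        refine ⟨by rw [hV]; exact subset_univ _, ?_⟩
        rintro p q ⟨-, (⟨rfl, rfl⟩ | ⟨rfl, rfl⟩ | ⟨rfl, rfl⟩ | ⟨rfl, rfl⟩)⟩
        · exact hxy.symm
        · exact hxy
        · exact hxz
        · exact hxz.symm
      obtain ⟨H, hH, hTH⟩ := exists_component G (path3 y x z) hTG
        (path3_connected hxy.ne.symm hxz.ne hyz)
      obtain ⟨u, w, huw, hverts⟩ := hcomp H hH
      have hy : y ∈ H.verts := hTH.1 (by simp [path3])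
      have hx : x ∈ H.verts := hTH.1 (by simp [path3])
      have hz : z ∈ H.verts := hTH.1 (by simp [path3])
      rw [hverts] at hy hx hz
      rcases hy with h1 | h1 <;> rcases hx with h2 | h2 <;> rcases hz with h3 | h3 <;>
        first
        | exact hxy.ne.symm (h1.trans h2.symm)
        | exact hxz.ne (h2.trans h3.symm)
        | exact hyz (h1.trans h3.symm)
    -- the matching function
    let m : X → X := fun x => Classical.choose (hex x)
    have hmadj : ∀ x, G.Adj x (m x) := fun x => Classical.choose_spec (hex x)
    have hadj_iff : ∀ x y, G.Adj x y ↔ y = m x :=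
      fun x y => ⟨fun h => hm x y (m x) h (hmadj x), fun h => h ▸ hmadj x⟩
    have hmne : ∀ x, m x ≠ x := fun x => (hmadj x).ne.symm
    have hmm : ∀ x, m (m x) = x :=
      fun x => hm (m x) (m (m x)) x (hmadj (m x)) (hmadj x).symm
    -- the setoid of matched pairs
    have requiv : Equivalence (fun x y : X => y = x ∨ y = m x) := by
      refine ⟨fun x => Or.inl rfl, ?_, ?_⟩
      · rintro x y (rfl | rfl)
        · exact Or.inl rfl
        · exact Or.inr (hmm x).symm
      · rintro x y z (rfl | rfl) h2
        · exact h2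
        · rcases h2 with rfl | rfl
          · exact Or.inr rfl
          · exact Or.inl (hmm x)
    let s : Setoid X := ⟨fun x y => y = x ∨ y = m x, requiv⟩
    let A : Set X := {x | (Quotient.mk s x).out = x}
    let B : Set X := Aᶜ
    have hout : ∀ x, (Quotient.mk s x).out = x ∨ (Quotient.mk s x).out = m x := by
      intro x
      have h := Quotient.exact (Quotient.out_eq (Quotient.mk s x))
      rcases h with h | h
      · exact Or.inl h.symm
      · refine Or.inr ?_
        conv_rhs => rw [h]
        rw [hmm]
    have hmk : ∀ x, Quotient.mk s (m x) = Quotient.mk s x :=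
      fun x => Quotient.sound (Or.inr (hmm x).symm)
    have hAmB : ∀ x, x ∈ A → m x ∈ B := by
      intro x hx hmx
      have h1 : (Quotient.mk s (m x)).out = m x := hmx
      rw [hmk] at h1
      have h2 : (Quotient.mk s x).out = x := hx
      exact hmne x (h1.symm.trans h2)
    have hBmA : ∀ x, x ∈ B → m x ∈ A := by
      intro x hx
      rcases hout x with h | h
      · exact absurd h hx
      · show (Quotient.mk s (m x)).out = m x
        rw [hmk]
        exact h
    have hAne : A.Nonempty := by
      have x0 : X := Classical.arbitrary X
      refine ⟨(Quotient.mk s x0).out, ?_⟩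
      show (Quotient.mk s (Quotient.mk s x0).out).out = (Quotient.mk s x0).out
      rw [Quotient.out_eq]
    have hBne : B.Nonempty := ⟨m hAne.choose, hAmB _ hAne.choose_spec⟩
    have hABdisj : Disjoint A B := disjoint_compl_right
    have hABunion : A ∪ B = Set.univ := Set.union_compl_self A
    -- the ultrametric
    let d : X → X → ℝ := fun x y => if x = y then 0 else if y = m x then 1 else 2
    have hd0 : ∀ x, d x x = 0 := fun x => if_pos rfl
    have hd1 : ∀ x, d x (m x) = 1 := by
      intro x
      show (if x = m x then (0:ℝ) else if m x = m x then 1 else 2) = 1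
      rw [if_neg (Ne.symm (hmne x)), if_pos rfl]
    have hd2 : ∀ x y, x ≠ y → y ≠ m x → d x y = 2 := by
      intro x y h1 h2
      show (if x = y then (0:ℝ) else if y = m x then 1 else 2) = 2
      rw [if_neg h1, if_neg h2]
    have hdvals : ∀ x y, d x y = 0 ∨ d x y = 1 ∨ d x y = 2 := by
      intro x y
      by_cases h1 : x = y
      · subst h1; exact Or.inl (hd0 x)
      · by_cases h2 : y = m x
        · subst h2; exact Or.inr (Or.inl (hd1 x))
        · exact Or.inr (Or.inr (hd2 x y h1 h2))
    have hd_eq0 : ∀ x y, d x y = 0 ↔ x = y := by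
      intro x y
      constructor
      · intro h
        by_contra h1
        by_cases h2 : y = m x
        · subst h2; rw [hd1] at h; norm_num at h
        · rw [hd2 x y h1 h2] at h; norm_num at h
      · rintro rfl; exact hd0 x
    have hd_eq1 : ∀ x y, d x y = 1 ↔ (x ≠ y ∧ y = m x) := by
      intro x y
      constructor
      · intro h
        by_cases h1 : x = y
        · subst h1; rw [hd0] at h; norm_num at h
        · by_cases h2 : y = m x
          · exact ⟨h1, h2⟩
          · rw [hd2 x y h1 h2] at h; norm_num at h
      · rintro ⟨h1, rfl⟩; exact hd1 x
    have hd_symm : ∀ x y, d x y = d y x := by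
      intro x y
      by_cases h1 : x = y
      · subst h1; rfl
      · by_cases h2 : y = m x
        · subst h2
          rw [hd1]
          exact (hd_eq1 (m x) x).2 ⟨hmne x, (hmm x).symm⟩ |>.symm
        · have h2' : x ≠ m y := fun h => h2 (by rw [h, hmm])
          rw [hd2 x y h1 h2, hd2 y x (Ne.symm h1) h2']
    have hd_nonneg : ∀ x y, 0 ≤ d x y := by
      intro x y
      rcases hdvals x y with h | h | h <;> rw [h] <;> norm_num
    have hUlt : IsUltrametric d := by
      refine ⟨⟨hd_nonneg, hd_symm, hd_eq0⟩, ?_⟩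
      intro x y z
      by_cases h1 : x = y
      · subst h1
        rw [hd0]
        exact le_max_of_le_left (hd_nonneg x z)
      · by_cases h2 : y = m x
        · subst h2
          rw [hd1]
          by_cases h3 : x = z
          · subst h3
            exact le_max_of_le_right (le_of_eq (hd1 _).symm)
          · refine le_max_of_le_left ?_
            rcases hdvals x z with h | h | h
            · exact absurd ((hd_eq0 x z).1 h) h3
            · rw [h]
            · rw [h]; norm_num
        · rw [hd2 x y h1 h2]
          have key : d x z = 2 ∨ d z y = 2 := by
            by_contra hk
            push_neg at hk
            have hxz : z = x ∨ z = m x := by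
              rcases hdvals x z with h | h | h
              · exact Or.inl ((hd_eq0 x z).1 h).symm
              · exact Or.inr ((hd_eq1 x z).1 h).2
              · exact absurd h hk.1
            have hzy : y = z ∨ y = m z := by
              rcases hdvals z y with h | h | h
              · exact Or.inl ((hd_eq0 z y).1 h).symm
              · exact Or.inr ((hd_eq1 z y).1 h).2
              · exact absurd h hk.2
            rcases hxz with rfl | rfl
            · rcases hzy with rfl | rfl
              · exact h1 rfl
              · exact h2 rfl
            · rcases hzy with rfl | rfl
              · exact h2 rfl
              · exact h1 (hmm x).symm
          rcases key with h | h
          · refine le_max_of_le_left ?_; rw [h]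
          · refine le_max_of_le_right ?_; rw [h]
    -- distance between the parts is 1
    have hBA : ∀ x, x ∉ A → x ∈ B := fun x hx => hx
    have hsd : setDist d A B = 1 := by
      apply IsLeast.csInf_eq
      constructor
      · exact ⟨hAne.choose, hAne.choose_spec, m hAne.choose,
          hAmB _ hAne.choose_spec, hd1 _⟩
      · rintro e ⟨p, hp, q, hq, rfl⟩
        have hpq : p ≠ q := fun h => hq (h ▸ hp)
        rcases hdvals p q with h | h | h
        · exact absurd ((hd_eq0 p q).1 h) hpq
        · rw [h]
        · rw [h]; norm_num
    -- proximinality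
    have hprox : ∀ S : Set X, (∀ x, x ∉ S → m x ∈ S) → ProximinalSet d S := by
      intro S hS x
      by_cases hx : x ∈ S
      · refine ⟨x, hx, ?_⟩
        have h0 : setDist d {x} S = 0 := by
          apply IsLeast.csInf_eq
          constructor
          · exact ⟨x, rfl, x, hx, hd0 x⟩
          · rintro e ⟨p, rfl, q, hq, rfl⟩
            exact hd_nonneg p q
        rw [h0, hd0]
      · refine ⟨m x, hS x hx, ?_⟩
        have h1 : setDist d {x} S = 1 := by
          apply IsLeast.csInf_eq
          constructor
          · exact ⟨x, rfl, m x, hS x hx, hd1 x⟩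
          · rintro e ⟨p, rfl, q, hq, rfl⟩
            have hpq : p ≠ q := fun h => hx (h ▸ hq)
            rcases hdvals p q with h | h | h
            · exact absurd ((hd_eq0 p q).1 h) hpq
            · rw [h]
            · rw [h]; norm_num
        rw [h1, hd1]
    have hproxA : ProximinalSet d A := hprox A (fun x hx => hBmA x (hBA x hx))
    have hproxB : ProximinalSet d B := hprox B (fun x hx => hAmB x (not_not.1 hx))
    -- edges of G
    have hGne : ∀ {x y : X}, G.Adj x y → x ≠ y := fun h => h.ne
    have hEdges : ∀ x y, G.Adj x y → (x ∈ A ∧ y ∈ B) ∨ (x ∈ B ∧ y ∈ A) := by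
      intro x y hxy
      have hy : y = m x := (hadj_iff x y).1 hxy
      subst hy
      by_cases hx : x ∈ A
      · exact Or.inl ⟨hx, hAmB x hx⟩
      · exact Or.inr ⟨hBA x hx, hBmA x (hBA x hx)⟩
    have hAdjIff : ∀ a ∈ A, ∀ b ∈ B, (G.Adj a b ↔ d a b = setDist d A B) := by
      intro a ha b hb
      rw [hsd]
      constructor
      · intro h
        rw [(hadj_iff a b).1 h]
        exact hd1 a
      · intro h
        obtain ⟨-, h2⟩ := (hd_eq1 a b).1 h
        exact (hadj_iff a b).2 h2
    -- be-paths
    have hbe : ∀ a ∈ A, IsBePath A B (edgeGr a (m a)) := by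
      intro a ha
      refine ⟨⟨[a, m a], edgeGr_pathOn (Ne.symm (hmne a))⟩, ?_, a, m a, ha, hAmB a ha,
        ⟨Ne.symm (hmne a), Or.inl ⟨rfl, rfl⟩⟩, ?_⟩
      · rw [hABunion]; exact subset_univ _
      · rintro x y ⟨-, (⟨rfl, rfl⟩ | ⟨h1, h2⟩)⟩ hxA hyB
        · exact ⟨rfl, rfl⟩
        · exact absurd hxA (by rw [h1]; exact hAmB a ha)
    -- G is the sup of the be-paths
    have hGsup : G = sSup ((fun a => edgeGr a (m a)) '' A) := by
      apply le_antisymm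
      · refine ⟨?_, ?_⟩
        · intro x _hx
          rw [SimpleGraph.Subgraph.verts_sSup]
          simp only [Set.mem_iUnion]
          by_cases hx : x ∈ A
          · exact ⟨edgeGr x (m x), ⟨x, hx, rfl⟩, Or.inl rfl⟩
          · exact ⟨edgeGr (m x) (m (m x)), ⟨m x, hBmA x (hBA x hx), rfl⟩,
              Or.inr (hmm x).symm⟩
        · intro x y hxy
          rw [SimpleGraph.Subgraph.sSup_adj]
          have hy : y = m x := (hadj_iff x y).1 hxy
          subst hy
          by_cases hx : x ∈ A
          · exact ⟨edgeGr x (m x), ⟨x, hx, rfl⟩, hxy.ne, Or.inl ⟨rfl, rfl⟩⟩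
          · refine ⟨edgeGr (m x) (m (m x)), ⟨m x, hBmA x (hBA x hx), rfl⟩, hxy.ne,
              Or.inr ⟨(hmm x).symm, rfl⟩⟩
      · apply sSup_le
        rintro P ⟨a, ha, rfl⟩
        refine ⟨by rw [hV]; exact subset_univ _, ?_⟩
        rintro x y ⟨-, (⟨rfl, rfl⟩ | ⟨rfl, rfl⟩)⟩
        · exact hmadj x
        · exact (hmadj y).symm
    refine ⟨d, A, B, hUlt, hABdisj, hproxA, hproxB,
      ⟨hAne, hBne, hABdisj, by rw [hV, hABunion], hEdges, hproxA, hproxB, hAdjIff⟩,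
      ⟨⟨hAne, hBne, hABdisj, by rw [hV]; exact subset_univ _, by rw [hV]; exact subset_univ _,
        (fun a => edgeGr a (m a)) '' A, hAne.image _, ?_, hGsup⟩, hproxA, hproxB, ?_⟩⟩
    · rintro P ⟨a, ha, rfl⟩
      exact hbe a ha
    · intro x _ y _ hxy
      rw [hsd]
      constructor
      · intro h
        rw [(hadj_iff x y).1 h, hd1]
      · intro h
        refine (hadj_iff x y).2 ?_
        rcases hdvals x y with h' | h' | h'
        · exact absurd ((hd_eq0 x y).1 h') hxy
        · exact ((hd_eq1 x y).1 h').2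
        · rw [h'] at h; norm_num at h
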